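/- For λ, μ > −1 and k ≠ l natural numbers, the polynomials C^{(k)}_{λ,μ} and C^{(l)}_{λ,μ} defined by C^{(k)}_{λ,μ}(v) = c^{(k)}_{λ,μ}((1−v)/2,(1+v)/2) (with c^{(k)}_{λ,μ} as in the Rodrigues-type formula in one variable) satisfy ∫_{−1}^{1} C^{(k)}_{λ,μ}(v) C^{(l)}_{λ,μ}(v) (1−v)^λ (1+v)^μ dv = 0. -/

import Mathlib

open Finset

/-- The operator `D = ∂/∂x − ∂/∂y` on real functions of two real variables. -/
noncomputable def Dop (F : ℝ → ℝ → ℝ) : ℝ → ℝ → ℝ :=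
  fun x y => deriv (fun x' => F x' y) x - deriv (fun y' => F x y') y

/-- One-variable Rodrigues-type function `c_{λ,μ}^{(k)}(x,y)` for `x, y > 0`. -/
noncomputable def cRC (l m : ℝ) (k : ℕ) (x y : ℝ) : ℝ :=
  x ^ (-l) * y ^ (-m) * (Dop^[k] (fun x' y' => x' ^ (l + k) * y' ^ (m + k))) x y

/-- `C^{(k)}_{λ,μ}(v) = c^{(k)}_{λ,μ}((1−v)/2,(1+v)/2)`. -/
noncomputable def CRC (l m : ℝ) (k : ℕ) (v : ℝ) : ℝ :=
  cRC l m k ((1 - v) / 2) ((1 + v) / 2)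

/-!
For `x, y ≠ 0` the Leibniz rule gives
`D^j (x^a y^b) = ∑ᵢ (j choose i) (-1)^(j-i) (x^a)⁽ⁱ⁾ (y^b)⁽ʲ⁻ⁱ⁾`. On the segment
`x = (1 - v) / 2, y = (1 + v) / 2` this is a function `G_j(v)` with `G_j' = -G_{j+1} / 2`.
Consequently `C^{(n)}` is a polynomial of degree `≤ n`, and the weighted product of `C^{(k)}` with a
polynomial `Q` is `2^(λ+μ) Q G_k` for `a = λ + k, b = μ + k`. For `j < k` every monomial of `G_j`
carries positive powers of `x` and `y`, so `G_j` vanishes at `±1`, and `G_k` is integrable because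
`λ, μ > -1`. Integrating by parts `k` times therefore moves all `k` derivatives onto `Q`,
which kills it when `deg Q < k`.
-/

namespace CRC

open Polynomial MeasureTheory

section Leibniz

variable {f g : ℕ → ℝ → ℝ}

def leibnizSum (f g : ℕ → ℝ → ℝ) (j : ℕ) (x y : ℝ) : ℝ :=
  ∑ i ∈ range (j + 1), (j.choose i : ℝ) * (-1) ^ (j - i) * (f i x * g (j - i) y)

theorem leibnizSum_succ (j : ℕ) (x y : ℝ) :
    leibnizSum f g (j + 1) x y =
      leibnizSum (fun i => f (i + 1)) g j x y - leibnizSum f (fun i => g (i + 1)) j x y := by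
  have := sum_choose_succ_mul (fun i k => (-1 : ℝ) ^ k * (f i x * g k y)) j
  simp only [leibnizSum, ← mul_assoc] at this ⊢
  rw [this, sub_eq_add_neg, add_comm, ← sum_neg_distrib]
  congr 1
  refine sum_congr rfl fun i hi => ?_
  rw [Nat.sub_add_comm (Nat.lt_succ_iff.mp (mem_range.mp hi)), pow_succ]
  ring

theorem hasDerivAt_leibnizSum_comp {U V : Set ℝ}
    (hf : ∀ i, ∀ x ∈ U, HasDerivAt (f i) (f (i + 1) x) x)
    (hg : ∀ i, ∀ y ∈ V, HasDerivAt (g i) (g (i + 1) y) y)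
    {X Y : ℝ → ℝ} {X' Y' t : ℝ} (hX : HasDerivAt X X' t) (hY : HasDerivAt Y Y' t)
    (hXU : X t ∈ U) (hYV : Y t ∈ V) (j : ℕ) :
    HasDerivAt (fun t => leibnizSum f g j (X t) (Y t))
      (X' * leibnizSum (fun i => f (i + 1)) g j (X t) (Y t) +
        Y' * leibnizSum f (fun i => g (i + 1)) j (X t) (Y t)) t := by
  simp only [leibnizSum, mul_sum, ← sum_add_distrib]
  refine HasDerivAt.fun_sum fun i _ => ?_
  refine ((((hf i _ hXU).comp t hX).mul ((hg (j - i) _ hYV).comp t hY)).const_mul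
    ((j.choose i : ℝ) * (-1) ^ (j - i))).congr_deriv ?_
  simp only [Function.comp_apply]
  ring

theorem Dop_iterate_mul {U V : Set ℝ} (hU : IsOpen U) (hV : IsOpen V)
    (hf : ∀ i, ∀ x ∈ U, HasDerivAt (f i) (f (i + 1) x) x)
    (hg : ∀ i, ∀ y ∈ V, HasDerivAt (g i) (g (i + 1) y) y) (j : ℕ) :
    ∀ x ∈ U, ∀ y ∈ V, Dop^[j] (fun x y => f 0 x * g 0 y) x y = leibnizSum f g j x y := by
  induction j with
  | zero => intro x _ y _; simp [leibnizSum]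
  | succ j ih =>
    intro x hx y hy
    have hx' : HasDerivAt (fun x => leibnizSum f g j x y)
        (leibnizSum (fun i => f (i + 1)) g j x y) x := by
      simpa using hasDerivAt_leibnizSum_comp hf hg (hasDerivAt_id x) (hasDerivAt_const x y) hx hy j
    have hy' : HasDerivAt (fun y => leibnizSum f g j x y)
        (leibnizSum f (fun i => g (i + 1)) j x y) y := by
      simpa using hasDerivAt_leibnizSum_comp hf hg (hasDerivAt_const y x) (hasDerivAt_id y) hx hy j
    rw [Function.iterate_succ_apply', Dop, leibnizSum_succ,
      Filter.EventuallyEq.deriv_eq (f := fun x => leibnizSum f g j x y)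
        (Filter.eventually_of_mem (hU.mem_nhds hx) fun x hx => ih x hx y hy),
      Filter.EventuallyEq.deriv_eq (f := fun y => leibnizSum f g j x y)
        (Filter.eventually_of_mem (hV.mem_nhds hy) fun y hy => ih x hx y hy),
      hx'.deriv, hy'.deriv]

end Leibniz

noncomputable def powDeriv (a : ℝ) (i : ℕ) (x : ℝ) : ℝ :=
  (descPochhammer ℝ i).eval a * x ^ (a - i)

theorem powDeriv_zero (a : ℝ) : powDeriv a 0 = fun x => x ^ a := by
  ext x
  simp [powDeriv]

theorem hasDerivAt_powDeriv (a : ℝ) (i : ℕ) {x : ℝ} (hx : x ≠ 0) :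
    HasDerivAt (powDeriv a i) (powDeriv a (i + 1) x) x := by
  refine ((Real.hasDerivAt_rpow_const (p := a - i) (Or.inl hx)).const_mul _).congr_deriv ?_
  rw [powDeriv, descPochhammer_succ_eval, Nat.cast_succ, sub_add_eq_sub_sub]
  ring

theorem continuous_powDeriv {a : ℝ} {i : ℕ} (h : (i : ℝ) ≤ a) : Continuous (powDeriv a i) :=
  continuous_const.mul (Real.continuous_rpow_const (sub_nonneg.mpr h))

theorem powDeriv_apply_zero {a : ℝ} {i : ℕ} (h : (i : ℝ) < a) : powDeriv a i 0 = 0 := by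
  rw [powDeriv, Real.zero_rpow (sub_pos.mpr h).ne', mul_zero]

theorem Dop_iterate_rpow_mul_rpow (a b : ℝ) (j : ℕ) {x y : ℝ} (hx : x ≠ 0) (hy : y ≠ 0) :
    Dop^[j] (fun x y => x ^ a * y ^ b) x y = leibnizSum (powDeriv a) (powDeriv b) j x y := by
  simpa only [powDeriv_zero] using
    Dop_iterate_mul isOpen_compl_singleton isOpen_compl_singleton
      (fun i _ hx => hasDerivAt_powDeriv a i hx) (fun i _ hy => hasDerivAt_powDeriv b i hy)
      j x hx y hy

theorem intervalIntegrable_half_add_rpow {q : ℝ} (hq : -1 < q) (c : ℝ) (a b : ℝ) :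
    IntervalIntegrable (fun v => ((c + v) / 2) ^ q) volume a b := by
  have h := ((intervalIntegral.intervalIntegrable_rpow' (a := (a + c) / 2) (b := (b + c) / 2)
    hq).comp_mul_right (c := 1 / 2)).comp_add_right c
  simp only [div_div_eq_mul_div, div_one] at h
  convert h using 2
  · congr 1; ring
  all_goals ring

theorem intervalIntegrable_rpow_mul_rpow {p q : ℝ} (hp : -1 < p) (hq : -1 < q) :
    IntervalIntegrable (fun v => ((1 - v) / 2) ^ p * ((1 + v) / 2) ^ q) volume (-1) 1 := by
  have left : ∀ (p : ℝ) {q : ℝ}, -1 < q → IntervalIntegrable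
      (fun v => ((1 - v) / 2) ^ p * ((1 + v) / 2) ^ q) volume (-1) 0 := by
    intro p q hq
    refine (intervalIntegrable_half_add_rpow hq 1 (-1) 0).continuousOn_mul ?_
    refine ContinuousOn.rpow_const (by fun_prop) fun v hv => Or.inl ?_
    rw [Set.uIcc_of_le (by norm_num)] at hv
    linarith [hv.2]
  -- `v ↦ -v` maps `[0, 1]` onto `[-1, 0]` and swaps the roles of `p` and `q`
  have right := (left q hp).comp_sub_left 0
  simp only [zero_sub, sub_neg_eq_add, sub_zero, zero_add, ← sub_eq_add_neg] at right
  simp_rw [mul_comm (((1 + _ : ℝ) / 2) ^ q)] at right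
  exact (left p hq).trans right.symm

noncomputable def segmentIterate (a b : ℝ) (j : ℕ) (v : ℝ) : ℝ :=
  leibnizSum (powDeriv a) (powDeriv b) j ((1 - v) / 2) ((1 + v) / 2)

theorem hasDerivAt_segmentIterate (a b : ℝ) (j : ℕ) {v : ℝ} (h₁ : v ≠ 1) (h₂ : v ≠ -1) :
    HasDerivAt (segmentIterate a b j) (-(1 / 2) * segmentIterate a b (j + 1) v) v := by
  have hX : HasDerivAt (fun v : ℝ => (1 - v) / 2) (-(1 / 2)) v := by
    simpa [neg_div] using ((hasDerivAt_id v).const_sub 1).div_const 2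
  have hY : HasDerivAt (fun v : ℝ => (1 + v) / 2) (1 / 2) v := by
    simpa using ((hasDerivAt_id v).const_add 1).div_const 2
  refine (hasDerivAt_leibnizSum_comp (U := {0}ᶜ) (V := {0}ᶜ)
    (fun i _ hx => hasDerivAt_powDeriv a i hx) (fun i _ hy => hasDerivAt_powDeriv b i hy)
    hX hY ?_ ?_ j).congr_deriv ?_
  · rw [Set.mem_compl_singleton_iff]
    intro h
    exact h₁ (by linarith)
  · rw [Set.mem_compl_singleton_iff]
    intro h
    exact h₂ (by linarith)
  · rw [segmentIterate, leibnizSum_succ]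
    ring

theorem continuous_segmentIterate {a b : ℝ} {j : ℕ} (ha : (j : ℝ) ≤ a) (hb : (j : ℝ) ≤ b) :
    Continuous (segmentIterate a b j) := by
  unfold segmentIterate leibnizSum
  refine continuous_finsetSum _ fun i hi => continuous_const.mul ?_
  have hij : i ≤ j := Nat.lt_succ_iff.mp (mem_range.mp hi)
  refine ((continuous_powDeriv ?_).comp (by fun_prop)).mul
    ((continuous_powDeriv ?_).comp (by fun_prop))
  · exact le_trans (by exact_mod_cast hij) ha
  · exact le_trans (by exact_mod_cast Nat.sub_le j i) hb

theorem segmentIterate_one (b : ℝ) {a : ℝ} {j : ℕ} (ha : (j : ℝ) < a) :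
    segmentIterate a b j 1 = 0 := by
  unfold segmentIterate leibnizSum
  refine sum_eq_zero fun i hi => ?_
  have hij : (i : ℝ) ≤ j := by exact_mod_cast Nat.lt_succ_iff.mp (mem_range.mp hi)
  rw [sub_self, zero_div, powDeriv_apply_zero (hij.trans_lt ha), zero_mul, mul_zero]

theorem segmentIterate_neg_one (a : ℝ) {b : ℝ} {j : ℕ} (hb : (j : ℝ) < b) :
    segmentIterate a b j (-1) = 0 := by
  unfold segmentIterate leibnizSum
  refine sum_eq_zero fun i _ => ?_
  have hij : ((j - i : ℕ) : ℝ) ≤ j := by exact_mod_cast Nat.sub_le j i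
  rw [add_neg_cancel, zero_div, powDeriv_apply_zero (hij.trans_lt hb), mul_zero, mul_zero]

theorem intervalIntegrable_segmentIterate {a b : ℝ} {j : ℕ} (ha : -1 < a - j) (hb : -1 < b - j) :
    IntervalIntegrable (segmentIterate a b j) volume (-1) 1 := by
  have hsum : segmentIterate a b j = ∑ i ∈ range (j + 1), fun v =>
      (j.choose i : ℝ) * (-1) ^ (j - i) *
        ((descPochhammer ℝ i).eval a * (descPochhammer ℝ (j - i)).eval b) *
        (((1 - v) / 2) ^ (a - i) * ((1 + v) / 2) ^ (b - (j - i : ℕ))) := by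
    ext v
    simp only [segmentIterate, leibnizSum, powDeriv, Finset.sum_apply]
    exact sum_congr rfl fun i _ => by ring
  rw [hsum]
  refine IntervalIntegrable.sum _ fun i hi =>
    (intervalIntegrable_rpow_mul_rpow ?_ ?_).const_mul _
  · have hij : (i : ℝ) ≤ j := by exact_mod_cast Nat.lt_succ_iff.mp (mem_range.mp hi)
    linarith
  · have hji : ((j - i : ℕ) : ℝ) ≤ j := by exact_mod_cast Nat.sub_le j i
    linarith

theorem integral_mul_segmentIterate_succ {a b : ℝ} {j : ℕ} (ha : (j : ℝ) < a) (hb : (j : ℝ) < b)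
    (Q : ℝ[X]) :
    ∫ v in (-1)..1, Q.eval v * segmentIterate a b (j + 1) v =
      2 * ∫ v in (-1)..1, Q.derivative.eval v * segmentIterate a b j v := by
  have hibp := intervalIntegral.integral_mul_deriv_eq_deriv_mul_of_hasDerivAt
    (u := Q.eval) (v := segmentIterate a b j) (u' := Q.derivative.eval)
    (v' := fun v => -(1 / 2) * segmentIterate a b (j + 1) v)
    Q.continuous.continuousOn (continuous_segmentIterate ha.le hb.le).continuousOn
    (fun v _ => Q.hasDerivAt v)
    (fun v hv => by
      rw [min_eq_left (by norm_num), max_eq_right (by norm_num)] at hv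
      exact hasDerivAt_segmentIterate a b j hv.2.ne hv.1.ne')
    (Q.derivative.continuous.intervalIntegrable _ _)
    ((intervalIntegrable_segmentIterate (by push_cast; linarith)
      (by push_cast; linarith)).const_mul _)
  rw [segmentIterate_one b ha, segmentIterate_neg_one a hb] at hibp
  simp only [mul_left_comm _ (-(1 / 2) : ℝ), intervalIntegral.integral_const_mul] at hibp
  linarith

theorem integral_mul_segmentIterate_eq_zero {a b : ℝ} {j : ℕ} (ha : (j : ℝ) < a + 1)
    (hb : (j : ℝ) < b + 1) {Q : ℝ[X]} (hQ : derivative^[j] Q = 0) :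
    ∫ v in (-1)..1, Q.eval v * segmentIterate a b j v = 0 := by
  induction j generalizing Q with
  | zero => simp [show Q = 0 from hQ]
  | succ j ih =>
    push_cast at ha hb
    rw [integral_mul_segmentIterate_succ (by linarith) (by linarith),
      ih (by linarith) (by linarith) hQ, mul_zero]

theorem rpow_neg_mul_powDeriv (l : ℝ) {n i : ℕ} (hi : i ≤ n) {x : ℝ} (hx : 0 < x) :
    x ^ (-l) * powDeriv (l + n) i x = (descPochhammer ℝ i).eval (l + n) * x ^ (n - i) := by
  rw [powDeriv, mul_left_comm, ← Real.rpow_add hx, ← Real.rpow_natCast, Nat.cast_sub hi]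
  ring_nf

theorem exists_polynomial_eqOn_CRC (l m : ℝ) (n : ℕ) :
    ∃ P : ℝ[X], P.natDegree ≤ n ∧ Set.EqOn (CRC l m n) P.eval (Set.Ioo (-1) 1) := by
  refine ⟨∑ i ∈ range (n + 1), C ((n.choose i : ℝ) * (-1) ^ (n - i) *
      ((descPochhammer ℝ i).eval (l + n) * (descPochhammer ℝ (n - i)).eval (m + n))) *
      ((C (1 / 2) * (1 - X)) ^ (n - i) * (C (1 / 2) * (1 + X)) ^ (n - (n - i))), ?_, ?_⟩
  · refine natDegree_sum_le_of_forall_le _ _ fun i _ => (natDegree_C_mul_le _ _).trans ?_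
    have h₁ : (C (1 / 2 : ℝ) * (1 - X)).natDegree ≤ 1 := by compute_degree
    have h₂ : (C (1 / 2 : ℝ) * (1 + X)).natDegree ≤ 1 := by compute_degree
    refine (natDegree_mul_le_of_le (natDegree_pow_le_of_le _ h₁)
      (natDegree_pow_le_of_le _ h₂)).trans ?_
    omega
  · intro v hv
    beta_reduce
    have hx : 0 < (1 - v) / 2 := by linarith [hv.2]
    have hy : 0 < (1 + v) / 2 := by linarith [hv.1]
    rw [CRC, cRC, Dop_iterate_rpow_mul_rpow _ _ _ hx.ne' hy.ne', leibnizSum, mul_sum,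
      eval_finsetSum]
    refine sum_congr rfl fun i hi => ?_
    have hin : i ≤ n := Nat.lt_succ_iff.mp (mem_range.mp hi)
    calc _ = (n.choose i : ℝ) * (-1) ^ (n - i) *
          (((1 - v) / 2) ^ (-l) * powDeriv (l + n) i ((1 - v) / 2)) *
          (((1 + v) / 2) ^ (-m) * powDeriv (m + n) (n - i) ((1 + v) / 2)) := by ring
      _ = _ := by
        rw [rpow_neg_mul_powDeriv l hin hx, rpow_neg_mul_powDeriv m (Nat.sub_le n i) hy]
        simp only [eval_mul, eval_C, eval_pow, eval_sub, eval_add, eval_one, eval_X]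
        ring

theorem CRC_mul_weight (l m : ℝ) (k : ℕ) {v : ℝ} (hv : v ∈ Set.Ioo (-1) 1) :
    CRC l m k v * (1 - v) ^ l * (1 + v) ^ m =
      2 ^ l * 2 ^ m * segmentIterate (l + k) (m + k) k v := by
  have hx : 0 < (1 - v) / 2 := by linarith [hv.2]
  have hy : 0 < (1 + v) / 2 := by linarith [hv.1]
  have h₁ : (1 - v) ^ l = 2 ^ l * ((1 - v) / 2) ^ l := by
    rw [← Real.mul_rpow zero_le_two hx.le, mul_div_cancel₀ _ two_ne_zero]
  have h₂ : (1 + v) ^ m = 2 ^ m * ((1 + v) / 2) ^ m := by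
    rw [← Real.mul_rpow zero_le_two hy.le, mul_div_cancel₀ _ two_ne_zero]
  rw [CRC, cRC, segmentIterate, Dop_iterate_rpow_mul_rpow _ _ _ hx.ne' hy.ne', h₁, h₂,
    Real.rpow_neg hx.le, Real.rpow_neg hy.le]
  field_simp

theorem integral_CRC_mul_eq_zero {l m : ℝ} (hl : -1 < l) (hm : -1 < m) {k : ℕ} {Q : ℝ[X]}
    (hQ : Q.natDegree < k) :
    ∫ v in Set.Ioo (-1 : ℝ) 1, CRC l m k v * Q.eval v * (1 - v) ^ l * (1 + v) ^ m = 0 := by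
  have hweight : Set.EqOn (fun v => CRC l m k v * Q.eval v * (1 - v) ^ l * (1 + v) ^ m)
      (fun v => 2 ^ l * 2 ^ m * (Q.eval v * segmentIterate (l + k) (m + k) k v)) (Set.Ioo (-1) 1) :=
    fun v hv => by linear_combination Q.eval v * CRC_mul_weight l m k hv
  rw [setIntegral_congr_fun measurableSet_Ioo hweight, integral_const_mul,
    ← integral_Ioc_eq_integral_Ioo, ← intervalIntegral.integral_of_le (by norm_num),
    integral_mul_segmentIterate_eq_zero (by linarith) (by linarith)
      (iterate_derivative_eq_zero hQ), mul_zero]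

end CRC

/-- Orthogonality of the polynomials `C^{(k)}_{λ,μ}` for the weight `(1−v)^λ (1+v)^μ` on
`(−1,1)`. -/
theorem CRC_orthogonal (l m : ℝ) (hl : -1 < l) (hm : -1 < m) (k n : ℕ) (hkn : k ≠ n) :
    ∫ v in Set.Ioo (-1:ℝ) 1,
      CRC l m k v * CRC l m n v * (1 - v) ^ l * (1 + v) ^ m = 0 := by
  wlog h : n < k generalizing k n
  · rw [← this n k hkn.symm (by omega)]
    simp only [mul_comm (CRC l m k _)]
  obtain ⟨P, hPdeg, hP⟩ := CRC.exists_polynomial_eqOn_CRC l m n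
  rw [MeasureTheory.setIntegral_congr_fun measurableSet_Ioo fun v hv => by rw [hP hv]]
  exact CRC.integral_CRC_mul_eq_zero hl hm (hPdeg.trans_lt h)
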